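/- arXiv:1705.05210 — 3 statements merged into one kernel-verified Lean document; each statement's English description precedes it below -/
import Mathlib

section
/- Let u > 1 and a > 1 be real numbers. Then (1/2)·({u}² − {u}) = (1/(2π))·∫_{−∞}^{∞} ((s+1)/(2s(s−1)) − ζ(s)/s)·u^{s+1}/(s+1) dt, where s = a + it and the integral is over real t. -/
/-!
The Mellin transform of `x ↦ max (1 - x) 0` is `1 / (s (s + 1))`, so Mellin inversion gives
`(1/2πi) ∫_{(σ)} y^(s+1) / (s (s+1)) ds = max (y - 1) 0` for every `σ > 0`.
The integrand equals `u^(s+1) / (2 s (s-1)) - ζ(s) u^(s+1) / (s (s+1))`. After the shift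
`s ↦ s + 1`, the first term contributes `u (u - 1) / 2`. Expanding `ζ(s) = ∑ (n+1)^(-s)`, which
may be integrated term by term since it converges absolutely on `re s = a > 1`, the second
contributes `∑_{1 ≤ m ≤ u} (u - m)`; the difference is `({u}² - {u}) / 2`.
-/

open MeasureTheory Complex Real Set

lemma sq_add_sq_le_norm_mul_add_one {σ : ℝ} (hσ : 0 ≤ σ) (t : ℝ) :
    σ ^ 2 + t ^ 2 ≤ ‖((σ : ℂ) + t * I) * ((σ : ℂ) + t * I + 1)‖ := by
  have hs1 : (σ : ℂ) + t * I + 1 = ((σ + 1 : ℝ) : ℂ) + t * I := by push_cast; ring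
  rw [norm_mul, hs1, norm_add_mul_I, norm_add_mul_I, ← sqrt_mul (by positivity)]
  apply le_sqrt_of_sq_le
  nlinarith [sq_nonneg t, sq_nonneg σ]

lemma verticalIntegrable_inv_mul_add_one {σ : ℝ} (hσ : 0 < σ) :
    VerticalIntegrable (fun s : ℂ => (s * (s + 1))⁻¹) σ := by
  have hmaj : Integrable fun t : ℝ => (σ ^ 2)⁻¹ * (1 + (t / σ) ^ 2)⁻¹ :=
    (integrable_inv_one_add_sq.comp_div hσ.ne').const_mul _
  refine hmaj.mono' (by fun_prop) (ae_of_all _ fun t => ?_)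
  have hpos : 0 < σ ^ 2 + t ^ 2 := by positivity
  calc ‖(((σ : ℂ) + t * I) * ((σ : ℂ) + t * I + 1))⁻¹‖
      ≤ (σ ^ 2 + t ^ 2)⁻¹ := by
        rw [norm_inv]; exact inv_anti₀ hpos (sq_add_sq_le_norm_mul_add_one hσ.le t)
    _ = (σ ^ 2)⁻¹ * (1 + (t / σ) ^ 2)⁻¹ := by field_simp

lemma hasMellin_max_one_sub {s : ℂ} (hs : 0 < s.re) :
    HasMellin (fun x : ℝ => ((max (1 - x) 0 : ℝ) : ℂ)) s (s * (s + 1))⁻¹ := by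
  have h1 := hasMellin_one_Ioc hs
  have h2 := hasMellin_cpow_Ioc 1 (s := s) (by simp; linarith)
  have hsub := hasMellin_sub h1.1 h2.1
  rw [h1.2, h2.2] at hsub
  have heq : EqOn (fun t : ℝ => indicator (Ioc 0 1) (fun _ => 1 : ℝ → ℂ) t
      - indicator (Ioc 0 1) (fun t : ℝ => (t : ℂ) ^ (1 : ℂ)) t)
      (fun x : ℝ => ((max (1 - x) 0 : ℝ) : ℂ)) (Ioi 0) := by
    intro t ht
    by_cases h : t ≤ 1
    · simp [indicator_of_mem (show t ∈ Ioc 0 1 from ⟨ht, h⟩), h]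
    · simp [indicator_of_notMem (show t ∉ Ioc 0 1 from fun h' => h h'.2), (not_le.mp h).le]
  have heq' : EqOn (fun t : ℝ => (t : ℂ) ^ (s - 1) • (indicator (Ioc 0 1) (fun _ => 1 : ℝ → ℂ) t
      - indicator (Ioc 0 1) (fun t : ℝ => (t : ℂ) ^ (1 : ℂ)) t))
      (fun t : ℝ => (t : ℂ) ^ (s - 1) • ((max (1 - t) 0 : ℝ) : ℂ)) (Ioi 0) :=
    fun t ht => by simp only [heq ht]
  refine ⟨(integrableOn_congr_fun heq' measurableSet_Ioi).mp hsub.1, ?_⟩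
  rw [mellin, ← setIntegral_congr_fun measurableSet_Ioi heq', ← mellin, hsub.2]
  have hs0 : s ≠ 0 := fun h => by simp [h] at hs
  have hs1 : s + 1 ≠ 0 := fun h => by
    rw [add_eq_zero_iff_eq_neg.mp h] at hs; simp at hs; linarith
  field_simp
  ring

lemma mellinInv_inv_mul_add_one {σ x : ℝ} (hσ : 0 < σ) (hx : 0 < x) :
    mellinInv σ (fun s => (s * (s + 1))⁻¹) x = ((max (1 - x) 0 : ℝ) : ℂ) := by
  have hmellin (t : ℝ) := (hasMellin_max_one_sub (s := (σ : ℂ) + t * I) (by simpa using hσ)).2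
  have hline : mellinInv σ (fun s => (s * (s + 1))⁻¹) x
      = mellinInv σ (mellin fun x : ℝ => ((max (1 - x) 0 : ℝ) : ℂ)) x := by
    simp only [mellinInv, hmellin]
  rw [hline]
  refine mellinInv_mellin_eq σ _ hx (hasMellin_max_one_sub (by simpa using hσ)).1 ?_
    (by fun_prop)
  exact (verticalIntegrable_inv_mul_add_one hσ).congr (ae_of_all _ fun t => (hmellin t).symm)

lemma integral_cpow_add_one_div_mul_add_one {σ y : ℝ} (hσ : 0 < σ) (hy : 0 < y) :
    ((1 / (2 * π) : ℝ) : ℂ) * ∫ t : ℝ, (y : ℂ) ^ ((σ : ℂ) + t * I + 1) /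
        (((σ : ℂ) + t * I) * ((σ : ℂ) + t * I + 1)) = ((max (y - 1) 0 : ℝ) : ℂ) := by
  have hmax : max (y - 1) 0 = y * max (1 - y⁻¹) 0 := by
    rw [mul_max_of_nonneg _ _ hy.le, mul_sub, mul_inv_cancel₀ hy.ne', mul_one, mul_zero]
  rw [hmax, ofReal_mul, ← mellinInv_inv_mul_add_one hσ (inv_pos.mpr hy), mellinInv, real_smul,
    mul_left_comm]
  congr 1
  rw [← integral_const_mul]
  refine integral_congr_ae (ae_of_all _ fun t => ?_)
  dsimp only
  rw [cpow_add _ _ (ofReal_ne_zero.2 hy.ne'), cpow_one, ofReal_inv, inv_cpow_ofReal_nonneg hy.le,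
    cpow_neg, inv_inv, smul_eq_mul, div_eq_mul_inv]
  ring

lemma verticalIntegrable_cpow_add_one_div_mul_add_one {σ y : ℝ} (hσ : 0 < σ) (hy : 0 < y) :
    VerticalIntegrable (fun s : ℂ => (y : ℂ) ^ (s + 1) / (s * (s + 1))) σ := by
  refine (verticalIntegrable_inv_mul_add_one hσ).bdd_mul (c := y ^ (σ + 1))
    (Continuous.const_cpow (f := fun t : ℝ => (σ : ℂ) + t * I + 1) (by fun_prop)
      (.inl (ofReal_ne_zero.2 hy.ne'))).aestronglyMeasurable (ae_of_all _ fun t => ?_)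
  simp [norm_cpow_eq_rpow_re_of_pos hy]

lemma summable_nat_add_one_rpow_neg {σ : ℝ} (hσ : 1 < σ) :
    Summable fun n : ℕ => ((n : ℝ) + 1) ^ (-σ) := by
  simpa using (summable_nat_add_iff 1).mpr (Real.summable_nat_rpow.mpr (by linarith : -σ < -1))

lemma norm_nat_add_one_cpow (n : ℕ) (s : ℂ) : ‖((n : ℂ) + 1) ^ s‖ = ((n : ℝ) + 1) ^ s.re := by
  rw [show (n : ℂ) + 1 = ((n + 1 : ℝ) : ℂ) by push_cast; rfl,
    norm_cpow_eq_rpow_re_of_pos (by positivity)]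

lemma riemannZeta_eq_tsum_nat_add_one_cpow_neg {s : ℂ} (hs : 1 < s.re) :
    riemannZeta s = ∑' n : ℕ, ((n : ℂ) + 1) ^ (-s) := by
  simp only [zeta_eq_tsum_one_div_nat_add_one_cpow hs, cpow_neg, one_div]

lemma norm_riemannZeta_le {s : ℂ} (hs : 1 < s.re) :
    ‖riemannZeta s‖ ≤ ∑' n : ℕ, ((n : ℝ) + 1) ^ (-s.re) := by
  have hnorm (n : ℕ) : ‖((n : ℂ) + 1) ^ (-s)‖ = ((n : ℝ) + 1) ^ (-s.re) := by
    rw [norm_nat_add_one_cpow, neg_re]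
  rw [riemannZeta_eq_tsum_nat_add_one_cpow_neg hs, ← tsum_congr hnorm]
  exact norm_tsum_le_tsum_norm (by simpa only [hnorm] using summable_nat_add_one_rpow_neg hs)

lemma continuous_riemannZeta_vertical {σ : ℝ} (hσ : 1 < σ) :
    Continuous fun t : ℝ => riemannZeta ((σ : ℂ) + t * I) := by
  refine continuous_iff_continuousAt.2 fun t => ?_
  have hne : (σ : ℂ) + t * I ≠ 1 := fun h => by
    have := congrArg re h; simp at this; linarith
  exact (differentiableAt_riemannZeta hne).continuousAt.comp (f := fun t : ℝ => (σ : ℂ) + t * I)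
    (x := t) (by fun_prop)

lemma VerticalIntegrable.riemannZeta_mul {σ : ℝ} (hσ : 1 < σ) {g : ℂ → ℂ}
    (hg : VerticalIntegrable g σ) : VerticalIntegrable (fun s => riemannZeta s * g s) σ :=
  hg.bdd_mul (continuous_riemannZeta_vertical hσ).aestronglyMeasurable
    (ae_of_all _ fun t => by simpa using norm_riemannZeta_le (s := (σ : ℂ) + t * I) (by simpa))

lemma integral_riemannZeta_mul_eq_tsum {σ : ℝ} (hσ : 1 < σ) {g : ℂ → ℂ}
    (hg : VerticalIntegrable g σ) :
    ∫ t : ℝ, riemannZeta ((σ : ℂ) + t * I) * g ((σ : ℂ) + t * I)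
      = ∑' n : ℕ, ∫ t : ℝ, ((n : ℂ) + 1) ^ (-((σ : ℂ) + t * I)) * g ((σ : ℂ) + t * I) := by
  have hnorm (n : ℕ) (t : ℝ) : ‖((n : ℂ) + 1) ^ (-((σ : ℂ) + t * I))‖ = ((n : ℝ) + 1) ^ (-σ) := by
    simp [norm_nat_add_one_cpow]
  have hint (n : ℕ) : Integrable fun t : ℝ =>
      ((n : ℂ) + 1) ^ (-((σ : ℂ) + t * I)) * g ((σ : ℂ) + t * I) :=
    hg.bdd_mul (Continuous.const_cpow (f := fun t : ℝ => -((σ : ℂ) + t * I)) (by fun_prop)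
      (.inl (Nat.cast_add_one_ne_zero n))).aestronglyMeasurable
      (ae_of_all _ fun t => (hnorm n t).le)
  have hsum : Summable fun n : ℕ => ∫ t : ℝ,
      ‖((n : ℂ) + 1) ^ (-((σ : ℂ) + t * I)) * g ((σ : ℂ) + t * I)‖ := by
    simp only [norm_mul, hnorm, integral_const_mul]
    exact (summable_nat_add_one_rpow_neg hσ).mul_right _
  rw [integral_tsum_of_summable_integral_norm hint hsum]
  congr 1 with t
  rw [riemannZeta_eq_tsum_nat_add_one_cpow_neg (by simpa), tsum_mul_right]

lemma integral_riemannZeta_mul_cpow_add_one_div {σ y : ℝ} (hσ : 1 < σ) (hy : 0 < y) :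
    ((1 / (2 * π) : ℝ) : ℂ) * ∫ t : ℝ, riemannZeta ((σ : ℂ) + t * I) *
        ((y : ℂ) ^ ((σ : ℂ) + t * I + 1) / (((σ : ℂ) + t * I) * ((σ : ℂ) + t * I + 1)))
      = ∑' n : ℕ, ((max (y - (n + 1)) 0 : ℝ) : ℂ) := by
  rw [integral_riemannZeta_mul_eq_tsum hσ
    (verticalIntegrable_cpow_add_one_div_mul_add_one (by linarith) hy), ← tsum_mul_left]
  refine tsum_congr fun n => ?_
  have hn : (0 : ℝ) < n + 1 := by positivity
  have hterm (s : ℂ) : ((n : ℂ) + 1) ^ (-s) * ((y : ℂ) ^ (s + 1) / (s * (s + 1)))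
      = ((n + 1 : ℝ) : ℂ) * (((y / (n + 1) : ℝ) : ℂ) ^ (s + 1) / (s * (s + 1))) := by
    have hn' : ((n + 1 : ℝ) : ℂ) ≠ 0 := ofReal_ne_zero.2 hn.ne'
    rw [ofReal_div, div_cpow_ofReal_nonneg hy.le hn.le, cpow_add _ _ hn', cpow_one, cpow_neg]
    push_cast at hn' ⊢
    field_simp
  simp only [hterm]
  rw [integral_const_mul, mul_left_comm,
    integral_cpow_add_one_div_mul_add_one (by linarith) (div_pos hy hn), ← ofReal_mul,
    mul_max_of_nonneg _ _ hn.le, mul_sub, mul_div_cancel₀ _ hn.ne', mul_one, mul_zero]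

lemma sum_range_sub_nat_add_one (u : ℝ) (N : ℕ) :
    ∑ n ∈ Finset.range N, (u - (n + 1)) = N * u - N * (N + 1) / 2 := by
  induction N with
  | zero => simp
  | succ N ih => rw [Finset.sum_range_succ, ih]; push_cast; ring

lemma tsum_max_sub_nat_add_one {u : ℝ} (hu : 0 ≤ u) :
    ∑' n : ℕ, max (u - (n + 1)) 0 = ⌊u⌋₊ * u - ⌊u⌋₊ * (⌊u⌋₊ + 1) / 2 := by
  have hzero (n : ℕ) (hn : n ∉ Finset.range ⌊u⌋₊) : max (u - (n + 1)) 0 = 0 := by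
    have : u < n + 1 := (Nat.lt_floor_add_one u).trans_le (by simpa using hn)
    exact max_eq_right (by linarith)
  have hpos (n : ℕ) (hn : n ∈ Finset.range ⌊u⌋₊) : max (u - (n + 1)) 0 = u - (n + 1) := by
    have : (n : ℝ) + 1 ≤ u := by
      exact_mod_cast (Nat.le_floor_iff hu).mp (Finset.mem_range.mp hn)
    exact max_eq_left (by linarith)
  rw [tsum_eq_sum hzero, Finset.sum_congr rfl hpos, sum_range_sub_nat_add_one]

lemma half_fract_sq_sub_fract {u : ℝ} (hu : 0 ≤ u) :
    1 / 2 * (Int.fract u ^ 2 - Int.fract u) = u * (u - 1) / 2 - ∑' n : ℕ, max (u - (n + 1)) 0 := by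
  rw [tsum_max_sub_nat_add_one hu, Int.fract, ← natCast_floor_eq_intCast_floor hu]
  ring

/-- For real `u > 1` and `a > 1`,
`(1/2)({u}² - {u}) = (1/(2π)) ∫_{-∞}^{∞} ((s+1)/(2s(s-1)) - ζ(s)/s) u^{s+1}/(s+1) dt`
with `s = a + it`. -/
theorem popov_mellin_inversion_right (u a : ℝ) (hu : 1 < u) (ha : 1 < a) :
    ((1 / 2 * (Int.fract u ^ 2 - Int.fract u) : ℝ) : ℂ) =
      (1 / (2 * π) : ℝ) *
        ∫ t : ℝ, (((a : ℂ) + t * I + 1) / (2 * ((a : ℂ) + t * I) * ((a : ℂ) + t * I - 1)) -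
            riemannZeta ((a : ℂ) + t * I) / ((a : ℂ) + t * I)) *
          (u : ℂ) ^ ((a : ℂ) + t * I + 1) / ((a : ℂ) + t * I + 1) := by
  have hu0 : 0 < u := by linarith
  have hsplit (t : ℝ) :
      (((a : ℂ) + t * I + 1) / (2 * ((a : ℂ) + t * I) * ((a : ℂ) + t * I - 1)) -
            riemannZeta ((a : ℂ) + t * I) / ((a : ℂ) + t * I)) *
          (u : ℂ) ^ ((a : ℂ) + t * I + 1) / ((a : ℂ) + t * I + 1)
      = (u / 2 : ℂ) * ((u : ℂ) ^ (((a - 1 : ℝ) : ℂ) + t * I + 1) /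
            ((((a - 1 : ℝ) : ℂ) + t * I) * (((a - 1 : ℝ) : ℂ) + t * I + 1)))
        - riemannZeta ((a : ℂ) + t * I) * ((u : ℂ) ^ ((a : ℂ) + t * I + 1) /
            (((a : ℂ) + t * I) * ((a : ℂ) + t * I + 1))) := by
    set s : ℂ := (a : ℂ) + t * I
    have hs0 : s ≠ 0 := ne_zero_of_re_pos (by simp [s]; linarith)
    have hs1 : s - 1 ≠ 0 := sub_ne_zero.2 fun h => by
      have := congrArg re h; simp [s] at this; linarith
    have hs2 : s + 1 ≠ 0 := ne_zero_of_re_pos (by simp [s]; linarith)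
    have hw : ((a - 1 : ℝ) : ℂ) + t * I = s - 1 := by push_cast; ring
    rw [hw, sub_add_cancel, cpow_add s 1 (ofReal_ne_zero.2 hu0.ne'), cpow_one]
    field_simp
  have hK := verticalIntegrable_cpow_add_one_div_mul_add_one (σ := a - 1) (by linarith) hu0
  have hZK := VerticalIntegrable.riemannZeta_mul ha
    (verticalIntegrable_cpow_add_one_div_mul_add_one (by linarith) hu0)
  rw [integral_congr_ae (ae_of_all _ hsplit), integral_sub (hK.const_mul _) hZK]
  beta_reduce
  rw [integral_const_mul, mul_sub ((1 / (2 * π) : ℝ) : ℂ), mul_left_comm,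
    integral_cpow_add_one_div_mul_add_one (by linarith) hu0,
    integral_riemannZeta_mul_cpow_add_one_div ha hu0, half_fract_sq_sub_fract hu0.le,
    max_eq_left (by linarith), ← ofReal_tsum]
  push_cast
  ring
end

section
/- Let x > 1 be a real number and define F(s) = ((2−s)/(2s(s−1)) − ζ(1−s)/(1−s)) · x^{s−2} · ζ'(s)/(ζ(s)·(2−s)) for complex s. Then F has a pole of order at most 2 at s = 1, and its residue there equals (2 − log(2π))/(2x); equivalently, the derivative of s ↦ (s−1)²·F(s) tends to (2 − log(2π))/(2x) as s → 1 through values s ≠ 1. -/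
/-!
Write `ζ(s) = Z(s)/(s-1)` with `Z = riemannZeta₁` entire and `Z(1) = 1`, so that
`(s-1)² ζ'(s) = (s-1) Z'(s) - Z(s)`. Then `(s-1)² F(s) = A(s) G(s)` away from `s = 1`, where
`A(s) = (2-s)/(2s) + ζ(1-s)` and `G(s) = x^{s-2} ((s-1) Z'(s) - Z(s)) / (Z(s)(2-s))` are holomorphic
near `1`. Since `A(1) = 1/2 + ζ(0) = 0`, the derivative of `A G` at `1` is `A'(1) G(1)`, with
`G(1) = -1/x` and `A'(1) = -1 - ζ'(0) = log(2π)/2 - 1`.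
-/

open Complex Real Filter
open scoped Topology

theorem tendsto_deriv_nhdsNE_of_eventuallyEq {𝕜 F : Type*} [NontriviallyNormedField 𝕜]
    [NormedAddCommGroup F] [NormedSpace 𝕜 F] {f g : 𝕜 → F} {a : 𝕜}
    (hfg : f =ᶠ[𝓝[≠] a] g) (hg : ContinuousAt (deriv g) a) :
    Tendsto (deriv f) (𝓝[≠] a) (𝓝 (deriv g a)) := by
  refine (hg.tendsto.mono_left nhdsWithin_le_nhds).congr' ?_
  filter_upwards [eventually_eventually_nhdsWithin.2 hfg, self_mem_nhdsWithin] with s hs hsa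
  rw [isOpen_compl_singleton.nhdsWithin_eq hsa] at hs
  exact (Filter.EventuallyEq.deriv_eq hs).symm

theorem sub_one_sq_mul_deriv_riemannZeta {s : ℂ} (hs : s ≠ 1) :
    (s - 1) ^ 2 * deriv riemannZeta s = (s - 1) * deriv riemannZeta₁ s - riemannZeta₁ s := by
  have : s - 1 ≠ 0 := sub_ne_zero.2 hs
  rw [deriv_riemannZeta_eq_neg_inv_sub_sq_mul_add hs]
  field_simp
  ring

/-- `s - 1` times the prefactor `(2-s)/(2s(s-1)) - ζ(1-s)/(1-s)`. -/
noncomputable def popovCoeff (s : ℂ) : ℂ := (2 - s) / (2 * s) + riemannZeta (1 - s)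

noncomputable def popovTail (x s : ℂ) : ℂ :=
  x ^ (s - 2) * ((s - 1) * deriv riemannZeta₁ s - riemannZeta₁ s) / (riemannZeta₁ s * (2 - s))

theorem sub_one_sq_mul_popov_eq {x s : ℂ} (hs : s ≠ 1) :
    (s - 1) ^ 2 * (((2 - s) / (2 * s * (s - 1)) - riemannZeta (1 - s) / (1 - s)) *
      x ^ (s - 2) * deriv riemannZeta s / (riemannZeta s * (2 - s))) =
      popovCoeff s * popovTail x s := by
  have hs' : s - 1 ≠ 0 := sub_ne_zero.2 hs
  have hcoeff : (2 - s) / (2 * s * (s - 1)) - riemannZeta (1 - s) / (1 - s) =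
      popovCoeff s / (s - 1) := by
    rw [popovCoeff, ← neg_sub s 1, div_neg, sub_neg_eq_add, add_div, div_div]
  have hderiv : deriv riemannZeta s =
      ((s - 1) * deriv riemannZeta₁ s - riemannZeta₁ s) / (s - 1) ^ 2 := by
    rw [← sub_one_sq_mul_deriv_riemannZeta hs]
    field_simp
  rw [hcoeff, hderiv, riemannZeta_eq_inv_sub_mul hs, popovTail, inv_mul_eq_div]
  field_simp

theorem popovCoeff_one : popovCoeff 1 = 0 := by
  norm_num [popovCoeff, riemannZeta_zero]

theorem popovTail_one (x : ℂ) : popovTail x 1 = -x⁻¹ := by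
  norm_num [popovTail, cpow_neg_one]

theorem differentiableAt_popovCoeff {s : ℂ} (hs : s ≠ 0) : DifferentiableAt ℂ popovCoeff s := by
  have : DifferentiableAt ℂ riemannZeta (1 - s) := differentiableAt_riemannZeta (by simpa using hs)
  unfold popovCoeff
  fun_prop (disch := simpa)

theorem differentiableAt_popovTail {x s : ℂ} (hx : x ≠ 0) (hs : s ≠ 2) (hζ : riemannZeta₁ s ≠ 0) :
    DifferentiableAt ℂ (popovTail x) s := by
  have := differentiable_riemannZeta₁ s
  have := differentiable_riemannZeta₁.deriv s
  have : x ≠ 0 ∨ s - 2 ≠ 0 := Or.inl hx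
  have : riemannZeta₁ s * (2 - s) ≠ 0 := mul_ne_zero hζ (sub_ne_zero.2 hs.symm)
  unfold popovTail
  fun_prop (disch := assumption)

theorem analyticAt_popovCoeff_mul_popovTail {x : ℂ} (hx : x ≠ 0) :
    AnalyticAt ℂ (fun s => popovCoeff s * popovTail x s) 1 := by
  refine analyticAt_iff_eventually_differentiableAt.2 ?_
  filter_upwards [riemannZeta₁_ne_zero_of_near_one, eventually_ne_nhds one_ne_zero,
    eventually_ne_nhds (by norm_num : (1 : ℂ) ≠ 2)] with s hζ hs0 hs2
  exact (differentiableAt_popovCoeff hs0).mul (differentiableAt_popovTail hx hs2 hζ)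

theorem hasDerivAt_popovCoeff_one :
    HasDerivAt popovCoeff (Real.log (2 * π) / 2 - 1) 1 := by
  have hrational : HasDerivAt (fun s : ℂ => (2 - s) / (2 * s)) (-1) 1 := by
    refine (((hasDerivAt_id (1 : ℂ)).const_sub 2).div ((hasDerivAt_id (1 : ℂ)).const_mul 2)
      (by norm_num)).congr_deriv ?_
    norm_num
  have hreflected : HasDerivAt (fun s : ℂ => riemannZeta (1 - s)) (-deriv riemannZeta 0) 1 := by
    have hζ : HasDerivAt riemannZeta (deriv riemannZeta 0) (1 - 1) := by
      simpa using (differentiableAt_riemannZeta zero_ne_one).hasDerivAt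
    refine (hζ.comp 1 ((hasDerivAt_id (1 : ℂ)).const_sub 1)).congr_deriv ?_
    simp
  refine (hrational.add hreflected).congr_deriv ?_
  rw [deriv_riemannZeta_zero, ofReal_log (by positivity)]
  push_cast
  ring

theorem hasDerivAt_popovCoeff_mul_popovTail_one {x : ℂ} (hx : x ≠ 0) :
    HasDerivAt (fun s => popovCoeff s * popovTail x s) ((2 - Real.log (2 * π)) / (2 * x)) 1 := by
  have hG := differentiableAt_popovTail (s := 1) hx (by norm_num) (by simp)
  refine (hasDerivAt_popovCoeff_one.mul hG.hasDerivAt).congr_deriv ?_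
  rw [popovCoeff_one, popovTail_one]
  field_simp
  ring

/-- For real `x > 1`, the function
`F(s) = ((2-s)/(2s(s-1)) - ζ(1-s)/(1-s)) x^{s-2} ζ'(s)/(ζ(s)(2-s))`
has a pole of order at most 2 at `s = 1` with residue `(2 - log(2π))/(2x)`:
the derivative of `s ↦ (s-1)² F(s)` tends to `(2 - log(2π))/(2x)` as `s → 1`, `s ≠ 1`. -/
theorem popov_residue_at_one (x : ℝ) (hx : 1 < x) (F : ℂ → ℂ)
    (hF : ∀ s : ℂ, F s = ((2 - s) / (2 * s * (s - 1)) - riemannZeta (1 - s) / (1 - s)) *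
        (x : ℂ) ^ (s - 2) * deriv riemannZeta s / (riemannZeta s * (2 - s))) :
    Tendsto (deriv fun s : ℂ => (s - 1) ^ 2 * F s) (nhdsWithin 1 {(1 : ℂ)}ᶜ)
      (nhds (((2 - Real.log (2 * π)) / (2 * x) : ℝ) : ℂ)) := by
  have hx0 : (x : ℂ) ≠ 0 := ofReal_ne_zero.2 (by linarith)
  have hregular : (fun s : ℂ => (s - 1) ^ 2 * F s) =ᶠ[𝓝[≠] 1]
      fun s => popovCoeff s * popovTail x s :=
    eventually_nhdsWithin_of_forall fun s hs => by simp only [hF]; exact sub_one_sq_mul_popov_eq hs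
  have hlim := tendsto_deriv_nhdsNE_of_eventuallyEq hregular
    (analyticAt_popovCoeff_mul_popovTail hx0).deriv.continuousAt
  rw [(hasDerivAt_popovCoeff_mul_popovTail_one hx0).deriv] at hlim
  push_cast
  exact hlim
end

section
/- Let x > 1 and r ≥ 1 be real numbers, let k ≥ 1 be an integer, and define F_r(s) = ((2−s)/(2s(s−1)) − ζ(1−s)/(1−s)) · x^{s−2} · ζ'(s+r−1)/(ζ(s+r−1)·(2−s)) for complex s. Then F_r has a simple pole at s = 1 − 2k − r (corresponding to the trivial zero −2k of ζ) with residue −((2(k+1)+r−1)/(2(1−2k−r)(2k+r)) + ζ(2k+r)/(2k+r)) · x^{−2k−r−1}/(2k+r+1); that is, (s − (1−2k−r))·F_r(s) tends to this value as s → 1 − 2k − r through values s ≠ 1 − 2k − r. -/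
open Complex Real Filter

open scoped Topology

/-! Write `F_r(s) = G(s) · (ζ'/ζ)(s + r - 1)` with `G` continuous at `s₀ = 1 - 2k - r`. The point
`s₀ + r - 1 = -2k` is a simple zero of `ζ`: differentiating the functional equation
`ζ(1 - s) = 2 (2π)^{-s} Γ(s) cos(πs/2) ζ(s)` at `s = 2k + 1`, where the cosine has a simple zero
and the other factors do not vanish, gives `ζ'(-2k) ≠ 0`. Hence `(s - s₀) (ζ'/ζ)(s + r - 1) → 1`
and the residue is `G(s₀)`. -/

theorem tendsto_sub_mul_logDeriv_of_deriv_ne_zero {𝕜 : Type*} [NontriviallyNormedField 𝕜]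
    {f : 𝕜 → 𝕜} {a : 𝕜} (hf : DifferentiableAt 𝕜 f a) (hf' : ContinuousAt (deriv f) a)
    (ha : f a = 0) (hda : deriv f a ≠ 0) :
    Tendsto (fun z => (z - a) * logDeriv f z) (𝓝[≠] a) (𝓝 1) := by
  have hslope : Tendsto (slope f a) (𝓝[≠] a) (𝓝 (deriv f a)) :=
    hasDerivAt_iff_tendsto_slope.mp hf.hasDerivAt
  have hquot := (hf'.tendsto.mono_left nhdsWithin_le_nhds).div hslope hda
  rw [div_self hda] at hquot
  -- an identity for every `z`: where `f z = 0` both sides are `0` because `x / 0 = 0`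
  refine hquot.congr fun z => ?_
  rw [Pi.div_apply, slope_def_field, ha, sub_zero, logDeriv_apply, div_div_eq_mul_div]
  ring

theorem continuousAt_deriv_riemannZeta {s : ℂ} (hs : s ≠ 1) :
    ContinuousAt (deriv riemannZeta) s :=
  ((DifferentiableOn.deriv (fun _ hz => (differentiableAt_riemannZeta hz).differentiableWithinAt)
    isOpen_ne).differentiableAt (isOpen_ne.mem_nhds hs)).continuousAt

theorem riemannZeta_one_sub_eventuallyEq {t : ℂ} (ht : 1 < t.re) :
    (fun s => riemannZeta (1 - s)) =ᶠ[𝓝 t] fun s =>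
      (2 * (2 * π) ^ (-s) * Gamma s * riemannZeta s) * cos (π * s / 2) := by
  filter_upwards [(isOpen_lt continuous_const continuous_re).mem_nhds ht] with s hs
  rw [riemannZeta_one_sub]
  · ring
  · intro n hn
    have : (0 : ℝ) ≤ n := n.cast_nonneg
    simp only [hn, neg_re, natCast_re] at hs
    linarith
  · rintro rfl
    simp at hs

theorem deriv_riemannZeta_neg_two_mul_nat_add_one_ne_zero (n : ℕ) :
    deriv riemannZeta (-2 * (n + 1)) ≠ 0 := by
  set t : ℂ := 2 * n + 3
  have ht : 1 < t.re := by
    norm_num [t]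
    linarith [(n.cast_nonneg : (0 : ℝ) ≤ n)]
  have htn : ∀ m : ℕ, t ≠ -m := fun m h => by
    have : (0 : ℝ) ≤ m := m.cast_nonneg
    have := congrArg re h
    norm_num [t] at this
    linarith
  set Q : ℂ → ℂ := fun s => 2 * (2 * π) ^ (-s) * Gamma s * riemannZeta s
  have h2π : (2 * π : ℂ) ≠ 0 := by simp [Real.pi_ne_zero]
  have hQ : Q t ≠ 0 :=
    mul_ne_zero (mul_ne_zero (mul_ne_zero two_ne_zero (by simp [cpow_eq_zero_iff, h2π]))
      (Gamma_ne_zero htn)) (riemannZeta_ne_zero_of_one_lt_re ht)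
  have hQd : DifferentiableAt ℂ Q t :=
    (((differentiableAt_id.neg.const_cpow (Or.inl h2π)).const_mul 2).mul
      (differentiableAt_Gamma t htn)).mul (differentiableAt_riemannZeta fun h => by simp [h] at ht)
  have hcos : cos (π * t / 2) = 0 := cos_eq_zero_iff.2 ⟨n + 1, by push_cast [t]; ring⟩
  have hsin : sin (π * t / 2) ≠ 0 := fun h => by
    simpa [h, hcos] using sin_sq_add_cos_sq (π * t / 2)
  have hcd : HasDerivAt (fun s : ℂ => cos (π * s / 2)) (-sin (π * t / 2) * (π / 2)) t := by
    simpa using (((hasDerivAt_id t).const_mul (π : ℂ)).div_const 2).ccos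
  have hR : HasDerivAt (fun s => riemannZeta (1 - s)) (Q t * (-sin (π * t / 2) * (π / 2))) t := by
    simpa [hcos] using (hQd.hasDerivAt.mul hcd).congr_of_eventuallyEq
      (riemannZeta_one_sub_eventuallyEq ht)
  have hderiv : -deriv riemannZeta (-2 * (n + 1)) = Q t * (-sin (π * t / 2) * (π / 2)) := by
    rw [← hR.deriv, deriv_comp_const_sub]
    congr 2
    ring
  intro h0
  rw [h0, neg_zero] at hderiv
  exact mul_ne_zero hQ (mul_ne_zero (neg_ne_zero.2 hsin) (by simp [Real.pi_ne_zero])) hderiv.symm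

/-- `F_r(s) = popovRegularFactor x s * (ζ'/ζ)(s + r - 1)`. -/
noncomputable def popovRegularFactor (x s : ℂ) : ℂ :=
  ((2 - s) / (2 * s * (s - 1)) - riemannZeta (1 - s) / (1 - s)) * x ^ (s - 2) / (2 - s)

theorem continuousAt_popovRegularFactor (x : ℂ) {s : ℂ} (h0 : s ≠ 0) (h1 : s ≠ 1) (h2 : s ≠ 2) :
    ContinuousAt (popovRegularFactor x) s := by
  have hzeta : ContinuousAt (fun s => riemannZeta (1 - s)) s :=
    (differentiableAt_riemannZeta (by simpa [sub_eq_self] using h0)).continuousAt.comp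
      (by fun_prop)
  have hpow : ContinuousAt (fun s => x ^ (s - 2)) s :=
    ContinuousAt.comp (g := fun w => x ^ w) (continuousAt_const_cpow' (sub_ne_zero.2 h2))
      (by fun_prop)
  refine ((ContinuousAt.sub ?_ (hzeta.div (by fun_prop) (sub_ne_zero.2 h1.symm))).mul hpow).div
    (by fun_prop) (sub_ne_zero.2 h2.symm)
  exact continuousAt_const.sub continuousAt_id |>.div (by fun_prop)
    (mul_ne_zero (mul_ne_zero two_ne_zero h0) (sub_ne_zero.2 h1))

theorem popov_residue_at_trivial_zero_general (x r : ℝ) (hr : 1 ≤ r)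
    (k : ℕ) (hk : 1 ≤ k)
    (F : ℂ → ℂ)
    (hF : ∀ s : ℂ, F s =
      ((2 - s) / (2 * s * (s - 1)) - riemannZeta (1 - s) / (1 - s)) *
        (x : ℂ) ^ (s - 2) * deriv riemannZeta (s + r - 1) /
          (riemannZeta (s + r - 1) * (2 - s))) :
    Tendsto (fun s : ℂ => (s - (1 - 2 * (k : ℂ) - r)) * F s)
      (nhdsWithin (1 - 2 * (k : ℂ) - (r : ℂ)) {(1 - 2 * (k : ℂ) - (r : ℂ))}ᶜ)
      (nhds (-((2 * ((k : ℂ) + 1) + r - 1) / (2 * (1 - 2 * k - r) * (2 * k + r)) +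
          riemannZeta (2 * (k : ℂ) + r) / (2 * (k : ℂ) + r)) *
        (x : ℂ) ^ (-2 * (k : ℂ) - r - 1) / (2 * (k : ℂ) + r + 1))) := by
  obtain ⟨n, rfl⟩ : ∃ n, k = n + 1 := ⟨k - 1, by omega⟩
  push_cast
  set s₀ : ℂ := 1 - 2 * ((n : ℂ) + 1) - r
  have hre : s₀.re < 0 := by
    norm_num [s₀]
    linarith [(n.cast_nonneg : (0 : ℝ) ≤ n)]
  have hne : ∀ c : ℝ, 0 ≤ c → s₀ ≠ c := fun c hc h => by
    have := congrArg re h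
    simp only [ofReal_re] at this
    linarith
  have hzero : s₀ + (r - 1) = -2 * ((n : ℂ) + 1) := by ring
  have hshift : Tendsto (fun s : ℂ => s + (r - 1)) (𝓝[≠] s₀) (𝓝[≠] (-2 * ((n : ℂ) + 1))) :=
    hzero ▸ ((Homeomorph.addRight ((r : ℂ) - 1)).map_punctured_nhds_eq s₀).le
  have hpole : -2 * ((n : ℂ) + 1) ≠ 1 := fun h => by
    have := congrArg re h
    norm_num at this
    linarith [(n.cast_nonneg : (0 : ℝ) ≤ n)]
  have hlog := (tendsto_sub_mul_logDeriv_of_deriv_ne_zero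
    (differentiableAt_riemannZeta hpole) (continuousAt_deriv_riemannZeta hpole)
    (riemannZeta_neg_two_mul_nat_add_one n)
    (deriv_riemannZeta_neg_two_mul_nat_add_one_ne_zero n)).comp hshift
  have hreg : Tendsto (popovRegularFactor x) (𝓝[≠] s₀) (𝓝 (popovRegularFactor x s₀)) :=
    (continuousAt_popovRegularFactor x (hne 0 le_rfl) (by simpa using hne 1 zero_le_one)
      (by simpa using hne 2 zero_le_two)).tendsto.mono_left nhdsWithin_le_nhds
  convert (hreg.mul hlog).congr (fun s => ?_) using 2
  · rw [mul_one, popovRegularFactor, show 1 - s₀ = 2 * ((n : ℂ) + 1) + r by ring,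
      show s₀ - 2 = -2 * ((n : ℂ) + 1) - r - 1 by ring,
      show 2 * s₀ * (s₀ - 1) = -(2 * s₀ * (2 * ((n : ℂ) + 1) + r)) by ring, div_neg]
    ring
  · rw [Function.comp_apply, logDeriv_apply, hF, popovRegularFactor,
      div_mul_eq_div_div_swap _ (riemannZeta _),
      show s + (r - 1) - -2 * ((n : ℂ) + 1) = s - s₀ by ring, add_sub_assoc]
    ring

/-- For real `x > 1`, `r ≥ 1` and an integer `k ≥ 1`, the function
`F_r(s) = ((2-s)/(2s(s-1)) - ζ(1-s)/(1-s)) x^{s-2} ζ'(s+r-1)/(ζ(s+r-1)(2-s))`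
has a simple pole at `s = 1 - 2k - r` (coming from the trivial zero `-2k` of `ζ`)
with residue `-((2(k+1)+r-1)/(2(1-2k-r)(2k+r)) + ζ(2k+r)/(2k+r)) x^{-2k-r-1}/(2k+r+1)`. -/
theorem popov_residue_at_trivial_zero (x r : ℝ) (hx : 1 < x) (hr : 1 ≤ r)
    (k : ℕ) (hk : 1 ≤ k)
    (F : ℂ → ℂ)
    (hF : ∀ s : ℂ, F s =
      ((2 - s) / (2 * s * (s - 1)) - riemannZeta (1 - s) / (1 - s)) *
        (x : ℂ) ^ (s - 2) * deriv riemannZeta (s + r - 1) /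
          (riemannZeta (s + r - 1) * (2 - s))) :
    Tendsto (fun s : ℂ => (s - (1 - 2 * (k : ℂ) - r)) * F s)
      (nhdsWithin (1 - 2 * (k : ℂ) - (r : ℂ)) {(1 - 2 * (k : ℂ) - (r : ℂ))}ᶜ)
      (nhds (-((2 * ((k : ℂ) + 1) + r - 1) / (2 * (1 - 2 * k - r) * (2 * k + r)) +
          riemannZeta (2 * (k : ℂ) + r) / (2 * (k : ℂ) + r)) *
        (x : ℂ) ^ (-2 * (k : ℂ) - r - 1) / (2 * (k : ℂ) + r + 1))) :=
  popov_residue_at_trivial_zero_general x r hr k hk F hF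
end
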